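/- Let ρ > 0, d > 0, a > 0 be real and let L ≥ 2 be an integer. Then there exists exactly one pair (δ, δ̃) of positive real numbers satisfying the system of fixed-point equations δ = (1/L)·d/(ρ⁻¹(1+δ̃d) + a/(L(1+δ))) and δ̃ = (1/L)·1/(ρ⁻¹(1+δ) + a/(L(1+δ̃d))) + ((L−1)/L)·ρ/(1+δ). -/

import Mathlib

/-!
Write `u = 1 + δ̃ d` and `v = 1 + δ`. Comparing the two equations shows that the first summand
of the second one equals `u δ / (d v)`, which turns the second equation into the linear relation
`δ̃ = (L-1)/L · ρ + δ / d`. Substituting it into the first equation leaves a single cubic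
equation `g(δ) = 0`. On `(0, ∞)` the quotient `g(x) / x` is the sum of an increasing polynomial
and the increasing function `-dρ / x`, so `g` has at most one positive root, and it has one by
the intermediate value theorem since `g 0 < 0 < g (d ρ)`.
-/

open Set

/-- The cubic `g` above, with `K` in the role of `L`. -/
def fixedPointCubic (ρ d a K x : ℝ) : ℝ :=
  x * ((K * (1 + x) + (K - 1) * ρ * d) * (1 + x) + a * ρ) - d * ρ * (1 + x)

section FixedPoint

variable {ρ d a K : ℝ}

lemma fixedPointCubic_div_self {x : ℝ} (hx : x ≠ 0) :
    fixedPointCubic ρ d a K x / x =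
      (K * (1 + x) + (K - 1) * ρ * d) * (1 + x) + a * ρ - d * ρ - d * ρ / x := by
  unfold fixedPointCubic
  field_simp
  ring

lemma strictMonoOn_fixedPointCubic_div_self (hρ : 0 < ρ) (hd : 0 < d) (hK : 1 ≤ K) :
    StrictMonoOn (fun x => fixedPointCubic ρ d a K x / x) (Ioi 0) := by
  intro u (hu : 0 < u) v (hv : 0 < v) huv
  simp only [fixedPointCubic_div_self hu.ne', fixedPointCubic_div_self hv.ne']
  have hc : 0 ≤ (K - 1) * ρ * d := by
    have : 0 ≤ K - 1 := by linarith
    positivity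
  have hpoly : (K * (1 + u) + (K - 1) * ρ * d) * (1 + u) ≤
      (K * (1 + v) + (K - 1) * ρ * d) * (1 + v) := by
    gcongr
  have hinv : d * ρ / v < d * ρ / u := by gcongr
  linarith

lemma exists_pos_fixedPointCubic_eq_zero (hρ : 0 < ρ) (hd : 0 < d) (ha : 0 ≤ a) (hK : 1 ≤ K) :
    ∃ x, 0 < x ∧ fixedPointCubic ρ d a K x = 0 := by
  have hdρ : 0 < d * ρ := mul_pos hd hρ
  have hcont : ContinuousOn (fixedPointCubic ρ d a K) (Icc 0 (d * ρ)) := by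
    unfold fixedPointCubic
    fun_prop
  have hzero : fixedPointCubic ρ d a K 0 < 0 := by
    simp only [fixedPointCubic]
    linarith
  have hend : 0 < fixedPointCubic ρ d a K (d * ρ) := by
    have hK1 : 0 ≤ K - 1 := by linarith
    have hbracket : 0 < (K * (1 + d * ρ) + (K - 1) * ρ * d - 1) * (1 + d * ρ) + a * ρ := by
      have : 0 < K * (1 + d * ρ) + (K - 1) * ρ * d - 1 := by nlinarith
      positivity
    calc 0 < d * ρ * ((K * (1 + d * ρ) + (K - 1) * ρ * d - 1) * (1 + d * ρ) + a * ρ) :=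
          mul_pos hdρ hbracket
      _ = fixedPointCubic ρ d a K (d * ρ) := by unfold fixedPointCubic; ring
  obtain ⟨x, hx, hgx⟩ := intermediate_value_Ioo hdρ.le hcont ⟨hzero, hend⟩
  exact ⟨x, hx.1, hgx⟩

lemma fixedPointCubic_root_unique (hρ : 0 < ρ) (hd : 0 < d) (hK : 1 ≤ K) {x x' : ℝ}
    (hx : 0 < x) (hx' : 0 < x') (hgx : fixedPointCubic ρ d a K x = 0)
    (hgx' : fixedPointCubic ρ d a K x' = 0) : x = x' :=
  (strictMonoOn_fixedPointCubic_div_self (a := a) hρ hd hK).injOn hx hx'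
    (by simp only [hgx, hgx', zero_div])

variable {x y : ℝ}

lemma fixedPoint_first_eq_iff (hρ : 0 < ρ) (hd : 0 < d) (ha : 0 ≤ a) (hK : 0 < K)
    (hx : 0 ≤ x) (hy : 0 ≤ y) :
    x = 1 / K * d / (ρ⁻¹ * (1 + y * d) + a / (K * (1 + x))) ↔
      x * (K * (1 + x) * (1 + y * d) + a * ρ) = d * ρ * (1 + x) := by
  have hden : 0 < ρ⁻¹ * (1 + y * d) + a / (K * (1 + x)) := by positivity
  rw [eq_div_iff hden.ne']
  field_simp

lemma fixedPoint_second_eq_iff (hρ : 0 < ρ) (hd : 0 < d) (ha : 0 ≤ a) (hK : 0 < K)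
    (hx : 0 ≤ x) (hy : 0 ≤ y)
    (hfirst : x * (K * (1 + x) * (1 + y * d) + a * ρ) = d * ρ * (1 + x)) :
    y = 1 / K * (1 / (ρ⁻¹ * (1 + x) + a / (K * (1 + y * d)))) + (K - 1) / K * ρ / (1 + x) ↔
      y = (K - 1) / K * ρ + x / d := by
  have hsummand : 1 / K * (1 / (ρ⁻¹ * (1 + x) + a / (K * (1 + y * d)))) =
      (1 + y * d) * x / (d * (1 + x)) := by
    field_simp
    linear_combination -hfirst
  rw [hsummand]
  field_simp
  constructor <;> intro h <;> linear_combination h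

lemma fixedPoint_system_iff (hρ : 0 < ρ) (hd : 0 < d) (ha : 0 ≤ a) (hK : 0 < K)
    (hx : 0 ≤ x) (hy : 0 ≤ y) :
    (x = 1 / K * d / (ρ⁻¹ * (1 + y * d) + a / (K * (1 + x))) ∧
      y = 1 / K * (1 / (ρ⁻¹ * (1 + x) + a / (K * (1 + y * d)))) + (K - 1) / K * ρ / (1 + x)) ↔
      fixedPointCubic ρ d a K x = 0 ∧ y = (K - 1) / K * ρ + x / d := by
  rw [fixedPoint_first_eq_iff hρ hd ha hK hx hy]
  have hcubic (hy' : y = (K - 1) / K * ρ + x / d) :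
      x * (K * (1 + x) * (1 + y * d) + a * ρ) - d * ρ * (1 + x) = fixedPointCubic ρ d a K x := by
    subst hy'
    unfold fixedPointCubic
    field_simp
    ring
  constructor
  · rintro ⟨hfirst, hsecond⟩
    have hy' := (fixedPoint_second_eq_iff hρ hd ha hK hx hy hfirst).1 hsecond
    exact ⟨by rw [← hcubic hy', hfirst, sub_self], hy'⟩
  · rintro ⟨hg, hy'⟩
    have hfirst : x * (K * (1 + x) * (1 + y * d) + a * ρ) = d * ρ * (1 + x) := by
      rw [← sub_eq_zero, hcubic hy', hg]
    exact ⟨hfirst, (fixedPoint_second_eq_iff hρ hd ha hK hx hy hfirst).2 hy'⟩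

end FixedPoint

/-- For real parameters `ρ, d, a > 0` and an integer `L ≥ 2`, the
two-variable fixed-point system (equation (10) of the paper) admits exactly one
positive solution `(δ, δ̃)`. -/
theorem unique_positive_fixed_point (ρ d a : ℝ) (hρ : 0 < ρ) (hd : 0 < d) (ha : 0 < a)
    (L : ℕ) (hL : 2 ≤ L) :
    ∃! p : ℝ × ℝ, (0 < p.1 ∧ 0 < p.2) ∧
      p.1 = (1 / (L : ℝ)) * d / (ρ⁻¹ * (1 + p.2 * d) + a / ((L : ℝ) * (1 + p.1))) ∧
      p.2 = (1 / (L : ℝ)) * (1 / (ρ⁻¹ * (1 + p.1) + a / ((L : ℝ) * (1 + p.2 * d))))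
              + (((L : ℝ) - 1) / (L : ℝ)) * ρ / (1 + p.1) := by
  have hL1 : (1 : ℝ) ≤ L := by exact_mod_cast (by omega : 1 ≤ L)
  have hL0 : (0 : ℝ) < L := by linarith
  obtain ⟨x₀, hx₀, hg₀⟩ := exists_pos_fixedPointCubic_eq_zero hρ hd ha.le hL1
  have hy₀ : 0 < ((L : ℝ) - 1) / L * ρ + x₀ / d := by
    have : (0 : ℝ) ≤ L - 1 := by linarith
    positivity
  refine ⟨(x₀, ((L : ℝ) - 1) / L * ρ + x₀ / d), ⟨⟨hx₀, hy₀⟩, ?_⟩, ?_⟩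
  · exact (fixedPoint_system_iff hρ hd ha.le hL0 hx₀.le hy₀.le).2 ⟨hg₀, rfl⟩
  · rintro ⟨x, y⟩ ⟨⟨hx, hy⟩, hsystem⟩
    dsimp only at hx hy hsystem
    obtain ⟨hg, rfl⟩ := (fixedPoint_system_iff hρ hd ha.le hL0 hx.le hy.le).1 hsystem
    obtain rfl := fixedPointCubic_root_unique hρ hd hL1 hx hx₀ hg hg₀
    rfl
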